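/- arXiv:math-ph/0511086 — 3 statements merged into one kernel-verified Lean document; each statement's English description precedes it below -/
import Mathlib

section
/- Let Γ ⊂ ℝ² be a nonempty compact set, μ a Borel probability measure on Γ, and α > ᾱ ≥ 0 real numbers. Let ξ : Γ → ℝ be continuous, let G : Γ × Γ → ℂ be a function such that y ↦ G(x,y) is μ-integrable for every x ∈ Γ, and let σ, F, Φ : Γ → ℂ be bounded continuous functions satisfying α·σ(x) − ∫_Γ G(x,y) σ(y) μ(dy) = F(x) for every x ∈ Γ. Let (Y_n) be a sequence of nonempty finite subsets of Γ with |Y_n| → ∞ satisfying: (1) (1/|Y_n|) Σ_{y∈Y_n} f(y) → ∫_Γ f dμ for every bounded continuous f : Γ → ℂ; (2) sup_{n∈ℕ} (1/|Y_n|) sup_{x∈Y_n} Σ_{y∈Y_n, y≠x} |G(x,y)| ≤ ᾱ; (3) sup_{x∈Y_n} | (1/|Y_n|) Σ_{y∈Y_n, y≠x} σ(y) G(x,y) − ∫_Γ G(x,y) σ(y) μ(dy) | → 0 as n → ∞. Define, for each n, the matrix Λ_n on Y_n × Y_n by Λ_n(y,y) = |Y_n|·α − ξ(y) and Λ_n(y,y')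 = −G(y,y') for y ≠ y'. Then there is n₀ such that for all n ≥ n₀ the matrix Λ_n is invertible, and, denoting by q^{(n)} ∈ ℂ^{Y_n} the unique solution of Σ_{y'∈Y_n} Λ_n(y,y') q^{(n)}_{y'} = F(y) for all y ∈ Y_n, one has Σ_{y∈Y_n} Φ(y) q^{(n)}_y → ∫_Γ Φ(y) σ(y) μ(dy) as n → ∞. -/
open MeasureTheory Filter Set Matrix
open scoped Classical

noncomputable section

/-- The plane `ℝ²` as a Euclidean space. -/
abbrev Plane := EuclideanSpace ℝ (Fin 2)

/-- Sum over the erased universe of a finset coercion equals the sum over the erased finset. -/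
lemma sum_erase_coe {M : Type*} [AddCommGroup M] (s : Finset Plane) (f : Plane → M) (i : ↥s) :
    ∑ j ∈ Finset.univ.erase i, f (j : Plane) = ∑ y ∈ s.erase (i : Plane), f y := by
  rw [Finset.sum_erase_eq_sub (Finset.mem_univ i), Finset.sum_erase_eq_sub i.2]
  congr 1
  exact Finset.sum_coe_sort s f

/-- Quantitative bound for diagonally dominant matrices. -/
lemma diag_dominant_bound {ι : Type*} [Fintype ι] [DecidableEq ι] [Nonempty ι]
    (M : Matrix ι ι ℂ) (c d : ℝ) (hcd : d ≤ c)
    (hdiag : ∀ i, c ≤ ‖M i i‖)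
    (hoff : ∀ i, ∑ j ∈ Finset.univ.erase i, ‖M i j‖ ≤ d)
    (v : ι → ℂ) (i : ι) :
    (c - d) * ‖v i‖ ≤ Finset.univ.sup' Finset.univ_nonempty (fun j => ‖M.mulVec v j‖) := by
  obtain ⟨i₀, -, hi₀⟩ := Finset.exists_mem_eq_sup' Finset.univ_nonempty (fun j => ‖v j‖)
  have hle : ∀ j, ‖v j‖ ≤ ‖v i₀‖ := fun j => (Finset.le_sup' (fun j => ‖v j‖) (Finset.mem_univ j)).trans_eq hi₀
  have hsplit : M.mulVec v i₀ = M i₀ i₀ * v i₀ + ∑ j ∈ Finset.univ.erase i₀, M i₀ j * v j := by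
    rw [Matrix.mulVec, dotProduct, ← Finset.add_sum_erase _ _ (Finset.mem_univ i₀)]
  have h1 : ‖∑ j ∈ Finset.univ.erase i₀, M i₀ j * v j‖ ≤ d * ‖v i₀‖ := by
    calc ‖∑ j ∈ Finset.univ.erase i₀, M i₀ j * v j‖
        ≤ ∑ j ∈ Finset.univ.erase i₀, ‖M i₀ j * v j‖ := norm_sum_le _ _
      _ = ∑ j ∈ Finset.univ.erase i₀, ‖M i₀ j‖ * ‖v j‖ := by simp [norm_mul]
      _ ≤ ∑ j ∈ Finset.univ.erase i₀, ‖M i₀ j‖ * ‖v i₀‖ :=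
          Finset.sum_le_sum fun j _ => mul_le_mul_of_nonneg_left (hle j) (norm_nonneg _)
      _ = (∑ j ∈ Finset.univ.erase i₀, ‖M i₀ j‖) * ‖v i₀‖ := by rw [Finset.sum_mul]
      _ ≤ d * ‖v i₀‖ := mul_le_mul_of_nonneg_right (hoff i₀) (norm_nonneg _)
  have h2 : c * ‖v i₀‖ ≤ ‖M i₀ i₀ * v i₀‖ := by
    rw [norm_mul]; exact mul_le_mul_of_nonneg_right (hdiag i₀) (norm_nonneg _)
  have h3 : ‖M i₀ i₀ * v i₀‖ - ‖∑ j ∈ Finset.univ.erase i₀, M i₀ j * v j‖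
      ≤ ‖M.mulVec v i₀‖ := by
    rw [hsplit]
    have := norm_le_add_norm_add (M i₀ i₀ * v i₀) (∑ j ∈ Finset.univ.erase i₀, M i₀ j * v j)
    linarith
  have key : (c - d) * ‖v i₀‖ ≤ ‖M.mulVec v i₀‖ := by nlinarith [norm_nonneg (v i₀)]
  calc (c - d) * ‖v i‖ ≤ (c - d) * ‖v i₀‖ :=
        mul_le_mul_of_nonneg_left (hle i) (by linarith)
    _ ≤ ‖M.mulVec v i₀‖ := key
    _ ≤ Finset.univ.sup' Finset.univ_nonempty (fun j => ‖M.mulVec v j‖) :=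
        Finset.le_sup' (fun j => ‖M.mulVec v j‖) (Finset.mem_univ i₀)

/-- A strictly diagonally dominant matrix is invertible. -/
lemma diag_dominant_isUnit {ι : Type*} [Fintype ι] [DecidableEq ι] [Nonempty ι]
    (M : Matrix ι ι ℂ) (c d : ℝ) (hcd : d < c)
    (hdiag : ∀ i, c ≤ ‖M i i‖)
    (hoff : ∀ i, ∑ j ∈ Finset.univ.erase i, ‖M i j‖ ≤ d) :
    IsUnit M := by
  rw [← Matrix.mulVec_injective_iff_isUnit]
  intro v w hvw
  have h0 : M.mulVec (v - w) = 0 := by rw [Matrix.mulVec_sub, hvw, sub_self]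
  have hz : ∀ i, v i - w i = 0 := by
    intro i
    have hb := diag_dominant_bound M c d hcd.le hdiag hoff (v - w) i
    rw [h0] at hb
    simp only [Pi.zero_apply, norm_zero] at hb
    rw [Finset.sup'_const] at hb
    have : ‖(v - w) i‖ ≤ 0 := by
      by_contra h
      push_neg at h
      nlinarith
    simpa using norm_le_zero_iff.mp this
  funext i
  exact sub_eq_zero.mp (hz i)

set_option maxHeartbeats 2000000 in
/-- analytic core of the approximation theorem: let `μ` be a Borel
probability measure carried by the nonempty compact set `Γ ⊂ ℝ²`, `ξ` continuous,
`G` a kernel with `μ`-integrable rows, and `σ, F, Φ` bounded continuous functions on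
`Γ` with `α σ(x) − ∫_Γ G(x,y) σ(y) μ(dy) = F(x)` on `Γ`.  If finite sets `Yₙ ⊂ Γ`
with `|Yₙ| → ∞` satisfy the equidistribution, Schur and discretization hypotheses
(1)–(3), then the matrices `Λₙ` are eventually invertible and, `q⁽ⁿ⁾` denoting the
unique solution of `Λₙ q⁽ⁿ⁾ = F|_{Yₙ}`, one has
`Σ_{y∈Yₙ} Φ(y) q⁽ⁿ⁾_y → ∫_Γ Φ σ dμ`. -/
theorem point_approximation_core
    (Γ : Set Plane) (hΓc : IsCompact Γ) (hΓne : Γ.Nonempty)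
    (μ : Measure Plane) [IsProbabilityMeasure μ] (hμΓ : μ Γᶜ = 0)
    (α αbar : ℝ) (hαbar : 0 ≤ αbar) (hα : αbar < α)
    (ξ : Plane → ℝ) (hξ : ContinuousOn ξ Γ)
    (G : Plane → Plane → ℂ)
    (hGint : ∀ x ∈ Γ, IntegrableOn (fun y => G x y) Γ μ)
    (σ F Φ : Plane → ℂ)
    (hσ : ContinuousOn σ Γ) (hF : ContinuousOn F Γ) (hΦ : ContinuousOn Φ Γ)
    (heq : ∀ x ∈ Γ, (α : ℂ) * σ x - ∫ y in Γ, G x y * σ y ∂μ = F x)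
    (Y : ℕ → Finset Plane) (hYΓ : ∀ n, ↑(Y n) ⊆ Γ) (hYne : ∀ n, (Y n).Nonempty)
    (hYcard : Tendsto (fun n => (Y n).card) atTop atTop)
    (hequi : ∀ f : Plane → ℂ, ContinuousOn f Γ →
      Tendsto (fun n => (((Y n).card : ℂ))⁻¹ * ∑ y ∈ Y n, f y) atTop
        (nhds (∫ y in Γ, f y ∂μ)))
    (hSchur : ∀ n, ∀ x ∈ Y n,
      (1 / ((Y n).card : ℝ)) * ∑ y ∈ (Y n).erase x, ‖G x y‖ ≤ αbar)
    (hdiscr : Tendsto (fun n => (Y n).sup' (hYne n) fun x =>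
        ‖(((Y n).card : ℂ))⁻¹ * ∑ y ∈ (Y n).erase x, σ y * G x y
          - ∫ y in Γ, G x y * σ y ∂μ‖) atTop (nhds 0)) :
    ∃ n₀ : ℕ,
      (∀ n ≥ n₀, IsUnit (Matrix.of (fun y y' : ↥(Y n) =>
        if y = y' then (((Y n).card : ℂ) * α - ξ y) else -G y y'))) ∧
      Tendsto (fun n => ∑ y : ↥(Y n),
          Φ y * ((Matrix.of (fun y y' : ↥(Y n) =>
            if y = y' then (((Y n).card : ℂ) * α - ξ y) else -G y y'))⁻¹).mulVec
              (fun y' : ↥(Y n) => F y') y)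
        atTop (nhds (∫ y in Γ, Φ y * σ y ∂μ)) := by
  classical
  obtain ⟨Cξ₀, hCξ₀⟩ := hΓc.exists_bound_of_continuousOn hξ
  obtain ⟨Cσ₀, hCσ₀⟩ := hΓc.exists_bound_of_continuousOn hσ
  obtain ⟨CΦ₀, hCΦ₀⟩ := hΓc.exists_bound_of_continuousOn hΦ
  set Cξ := max Cξ₀ 0 with hCξdef
  set Cσ := max Cσ₀ 0 with hCσdef
  set CΦ := max CΦ₀ 0 with hCΦdef
  have hCξ : ∀ x ∈ Γ, |ξ x| ≤ Cξ := fun x hx =>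
    le_trans (by simpa [Real.norm_eq_abs] using hCξ₀ x hx) (le_max_left _ _)
  have hCσ : ∀ x ∈ Γ, ‖σ x‖ ≤ Cσ := fun x hx => le_trans (hCσ₀ x hx) (le_max_left _ _)
  have hCΦ : ∀ x ∈ Γ, ‖Φ x‖ ≤ CΦ := fun x hx => le_trans (hCΦ₀ x hx) (le_max_left _ _)
  have hCξ0 : (0:ℝ) ≤ Cξ := le_max_right _ _
  set β := α - αbar with hβdef
  have hβ : 0 < β := sub_pos.mpr hα
  have hNpos : ∀ n, 0 < ((Y n).card : ℝ) := fun n => by exact_mod_cast (hYne n).card_pos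
  -- the key quantitative estimate for every admissible n
  have hkey : ∀ n, 2 * Cξ ≤ ((Y n).card : ℝ) * β →
      IsUnit (Matrix.of (fun y y' : ↥(Y n) =>
        if y = y' then (((Y n).card : ℂ) * α - ξ y) else -G y y')) ∧
      ∀ i : ↥(Y n), ‖((Y n).card : ℂ) * ((Matrix.of (fun y y' : ↥(Y n) =>
          if y = y' then (((Y n).card : ℂ) * α - ξ y) else -G y y'))⁻¹).mulVec
            (fun y' : ↥(Y n) => F y') i - σ i‖
        ≤ (2 / β) * (Cξ * Cσ / ((Y n).card : ℝ) +
            (Y n).sup' (hYne n) (fun x =>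
              ‖(((Y n).card : ℂ))⁻¹ * ∑ y ∈ (Y n).erase x, σ y * G x y
                - ∫ y in Γ, G x y * σ y ∂μ‖)) := by
    intro n hn
    haveI hne : Nonempty ↥(Y n) := Finset.nonempty_coe_sort.mpr (hYne n)
    set Λ := Matrix.of (fun y y' : ↥(Y n) =>
        if y = y' then (((Y n).card : ℂ) * α - ξ y) else -G y y') with hΛdef
    have hNpos' := hNpos n
    have hNneC : ((Y n).card : ℂ) ≠ 0 := by
      exact_mod_cast Nat.cast_ne_zero.mpr (hYne n).card_pos.ne'
    -- diagonal lower bound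
    have hdiag : ∀ i : ↥(Y n), ((Y n).card : ℝ) * α - Cξ ≤ ‖Λ i i‖ := by
      intro i
      have hiΓ : (i : Plane) ∈ Γ := hYΓ n i.2
      have h1 : Λ i i = ((((Y n).card : ℝ) * α - ξ i : ℝ) : ℂ) := by
        simp only [hΛdef, Matrix.of_apply, if_pos rfl]
        push_cast
        ring
      rw [h1, Complex.norm_real, Real.norm_eq_abs]
      have h2 : ξ i ≤ Cξ := (le_abs_self _).trans (hCξ _ hiΓ)
      have h3 := le_abs_self (((Y n).card : ℝ) * α - ξ i)
      linarith
    -- off-diagonal row-sum bound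
    have hoff : ∀ i : ↥(Y n),
        ∑ j ∈ Finset.univ.erase i, ‖Λ i j‖ ≤ ((Y n).card : ℝ) * αbar := by
      intro i
      have h1 : ∑ j ∈ Finset.univ.erase i, ‖Λ i j‖
          = ∑ j ∈ Finset.univ.erase i, ‖G (i : Plane) (j : Plane)‖ := by
        refine Finset.sum_congr rfl fun j hj => ?_
        have hij : i ≠ j := fun h => (Finset.mem_erase.mp hj).1 h.symm
        simp [hΛdef, hij]
      rw [h1, sum_erase_coe (Y n) (fun y => ‖G (i : Plane) y‖) i]
      have hS := hSchur n i i.2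
      rw [one_div, inv_mul_le_iff₀ hNpos'] at hS
      linarith
    -- gap estimate
    have hprod : ((Y n).card : ℝ) * α - ((Y n).card : ℝ) * αbar = ((Y n).card : ℝ) * β := by
      rw [hβdef]; ring
    have hgap : ((Y n).card : ℝ) * β / 2
        ≤ (((Y n).card : ℝ) * α - Cξ) - ((Y n).card : ℝ) * αbar := by
      linarith
    have hdlt : ((Y n).card : ℝ) * αbar < ((Y n).card : ℝ) * α - Cξ := by
      have := mul_pos hNpos' hβ
      linarith
    have hU : IsUnit Λ := diag_dominant_isUnit Λ _ _ hdlt hdiag hoff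
    refine ⟨hU, ?_⟩
    set q := (Λ⁻¹).mulVec (fun y' : ↥(Y n) => F y') with hqdef
    have hsol : Λ.mulVec q = (fun y' : ↥(Y n) => F y') := by
      rw [hqdef, Matrix.mulVec_mulVec,
        Matrix.mul_nonsing_inv _ ((Matrix.isUnit_iff_isUnit_det _).mp hU),
        Matrix.one_mulVec]
    set w : ↥(Y n) → ℂ := fun i => ((Y n).card : ℂ) * q i - σ i with hwdef
    have hrow : ∀ i : ↥(Y n), Λ.mulVec (fun j : ↥(Y n) => σ j) i
        = (((Y n).card : ℂ) * α - ξ i) * σ i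
          - ∑ y ∈ (Y n).erase (i : Plane), G (i : Plane) y * σ y := by
      intro i
      have hsp : Λ.mulVec (fun j : ↥(Y n) => σ j) i
          = Λ i i * σ i + ∑ j ∈ Finset.univ.erase i, Λ i j * σ j := by
        rw [Matrix.mulVec, dotProduct,
          ← Finset.add_sum_erase _ _ (Finset.mem_univ i)]
      rw [hsp]
      have h1 : Λ i i = ((Y n).card : ℂ) * α - ξ i := by
        simp [hΛdef]
      have h2 : ∑ j ∈ Finset.univ.erase i, Λ i j * σ j
          = - ∑ y ∈ (Y n).erase (i : Plane), G (i : Plane) y * σ y := by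
        rw [← sum_erase_coe (Y n) (fun y => G (i : Plane) y * σ y) i,
          ← Finset.sum_neg_distrib]
        refine Finset.sum_congr rfl fun j hj => ?_
        have hij : i ≠ j := fun h => (Finset.mem_erase.mp hj).1 h.symm
        simp [hΛdef, hij, neg_mul]
      rw [h1, h2]
      ring
    have hMw : ∀ i : ↥(Y n), Λ.mulVec w i
        = (ξ (i : Plane) : ℂ) * σ i + ((Y n).card : ℂ) *
            ((((Y n).card : ℂ))⁻¹ * ∑ y ∈ (Y n).erase (i : Plane), σ y * G (i : Plane) y
              - ∫ y in Γ, G (i : Plane) y * σ y ∂μ) := by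
      intro i
      have hw' : w = (((Y n).card : ℂ) • q) - (fun j : ↥(Y n) => σ j) := rfl
      rw [hw', Matrix.mulVec_sub, Matrix.mulVec_smul, hsol]
      simp only [Pi.sub_apply, Pi.smul_apply, smul_eq_mul]
      rw [hrow i]
      have hiΓ : (i : Plane) ∈ Γ := hYΓ n i.2
      have hF' : F (i : Plane) = (α : ℂ) * σ i - ∫ y in Γ, G (i : Plane) y * σ y ∂μ :=
        (heq _ hiΓ).symm
      rw [hF']
      have hsum : ∑ y ∈ (Y n).erase (i : Plane), σ y * G (i : Plane) y
          = ∑ y ∈ (Y n).erase (i : Plane), G (i : Plane) y * σ y :=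
        Finset.sum_congr rfl fun y _ => mul_comm _ _
      rw [hsum]
      field_simp
      ring
    set en := (Y n).sup' (hYne n) (fun x =>
        ‖(((Y n).card : ℂ))⁻¹ * ∑ y ∈ (Y n).erase x, σ y * G x y
          - ∫ y in Γ, G x y * σ y ∂μ‖) with hendef
    have hbw : ∀ i : ↥(Y n), ‖Λ.mulVec w i‖ ≤ Cξ * Cσ + ((Y n).card : ℝ) * en := by
      intro i
      have hiΓ : (i : Plane) ∈ Γ := hYΓ n i.2
      rw [hMw i]
      have t1 : ‖(ξ (i : Plane) : ℂ) * σ (i : Plane)‖ ≤ Cξ * Cσ := by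
        rw [norm_mul, Complex.norm_real, Real.norm_eq_abs]
        exact mul_le_mul (hCξ _ hiΓ) (hCσ _ hiΓ) (norm_nonneg _) hCξ0
      have t2 : ‖((Y n).card : ℂ) *
          ((((Y n).card : ℂ))⁻¹ * ∑ y ∈ (Y n).erase (i : Plane), σ y * G (i : Plane) y
            - ∫ y in Γ, G (i : Plane) y * σ y ∂μ)‖ ≤ ((Y n).card : ℝ) * en := by
        rw [norm_mul, Complex.norm_natCast]
        refine mul_le_mul_of_nonneg_left ?_ (Nat.cast_nonneg _)
        exact Finset.le_sup' (fun x =>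
          ‖(((Y n).card : ℂ))⁻¹ * ∑ y ∈ (Y n).erase x, σ y * G x y
            - ∫ y in Γ, G x y * σ y ∂μ‖) i.2
      calc ‖_ + _‖ ≤ _ + _ := norm_add_le _ _
        _ ≤ Cξ * Cσ + ((Y n).card : ℝ) * en := add_le_add t1 t2
    intro i
    have hb := diag_dominant_bound Λ _ _ hdlt.le hdiag hoff w i
    have hsup : Finset.univ.sup' Finset.univ_nonempty (fun j => ‖Λ.mulVec w j‖)
        ≤ Cξ * Cσ + ((Y n).card : ℝ) * en :=
      Finset.sup'_le _ _ fun j _ => hbw j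
    have hNb2 : 0 < ((Y n).card : ℝ) * β / 2 := by positivity
    have h5 : (((Y n).card : ℝ) * β / 2) * ‖w i‖ ≤ Cξ * Cσ + ((Y n).card : ℝ) * en := by
      have := mul_le_mul_of_nonneg_right hgap (norm_nonneg (w i))
      linarith
    have h6 : ‖w i‖ ≤ (Cξ * Cσ + ((Y n).card : ℝ) * en) / (((Y n).card : ℝ) * β / 2) := by
      rw [le_div_iff₀ hNb2]
      linarith
    have h7 : (Cξ * Cσ + ((Y n).card : ℝ) * en) / (((Y n).card : ℝ) * β / 2)
        = (2 / β) * (Cξ * Cσ / ((Y n).card : ℝ) + en) := by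
      field_simp
    rw [h7] at h6
    exact h6
  -- choice of the threshold
  have hNtop : Tendsto (fun n => ((Y n).card : ℝ)) atTop atTop :=
    tendsto_natCast_atTop_atTop.comp hYcard
  have hevent : ∀ᶠ n in atTop, 2 * Cξ ≤ ((Y n).card : ℝ) * β :=
    (hNtop.atTop_mul_const hβ).eventually_ge_atTop (2 * Cξ)
  obtain ⟨n₀, hn₀⟩ := eventually_atTop.mp hevent
  refine ⟨n₀, fun n hn => (hkey n (hn₀ n hn)).1, ?_⟩
  -- convergence
  have hA := hequi (fun y => Φ y * σ y) (hΦ.mul hσ)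
  have hB : Tendsto (fun n => CΦ * ((2 / β) * (Cξ * Cσ / ((Y n).card : ℝ) +
      (Y n).sup' (hYne n) (fun x =>
        ‖(((Y n).card : ℂ))⁻¹ * ∑ y ∈ (Y n).erase x, σ y * G x y
          - ∫ y in Γ, G x y * σ y ∂μ‖)))) atTop (nhds 0) := by
    have h1 : Tendsto (fun n => Cξ * Cσ / ((Y n).card : ℝ)) atTop (nhds 0) :=
      tendsto_const_nhds.div_atTop hNtop
    have h2 := ((h1.add hdiscr).const_mul (2 / β)).const_mul CΦ
    simpa using h2
  have hdiff : ∀ᶠ n in atTop,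
      ‖(∑ y : ↥(Y n), Φ y * ((Matrix.of (fun y y' : ↥(Y n) =>
          if y = y' then (((Y n).card : ℂ) * α - ξ y) else -G y y'))⁻¹).mulVec
            (fun y' : ↥(Y n) => F y') y)
        - (((Y n).card : ℂ))⁻¹ * ∑ y ∈ Y n, Φ y * σ y‖
      ≤ CΦ * ((2 / β) * (Cξ * Cσ / ((Y n).card : ℝ) +
          (Y n).sup' (hYne n) (fun x =>
            ‖(((Y n).card : ℂ))⁻¹ * ∑ y ∈ (Y n).erase x, σ y * G x y
              - ∫ y in Γ, G x y * σ y ∂μ‖))) := by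
    filter_upwards [hevent] with n hn
    haveI hne : Nonempty ↥(Y n) := Finset.nonempty_coe_sort.mpr (hYne n)
    obtain ⟨-, hw⟩ := hkey n hn
    have hNneC : ((Y n).card : ℂ) ≠ 0 := by
      exact_mod_cast Nat.cast_ne_zero.mpr (hYne n).card_pos.ne'
    have hNneR : ((Y n).card : ℝ) ≠ 0 := (hNpos n).ne'
    set q := ((Matrix.of (fun y y' : ↥(Y n) =>
        if y = y' then (((Y n).card : ℂ) * α - ξ y) else -G y y'))⁻¹).mulVec
          (fun y' : ↥(Y n) => F y') with hqdef
    set Bn := (2 / β) * (Cξ * Cσ / ((Y n).card : ℝ) +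
        (Y n).sup' (hYne n) (fun x =>
          ‖(((Y n).card : ℂ))⁻¹ * ∑ y ∈ (Y n).erase x, σ y * G x y
            - ∫ y in Γ, G x y * σ y ∂μ‖)) with hBndef
    have hBn0 : 0 ≤ Bn := le_trans (norm_nonneg _) (hw (Classical.arbitrary _))
    have hArw : (((Y n).card : ℂ))⁻¹ * ∑ y ∈ Y n, Φ y * σ y
        = ∑ i : ↥(Y n), (((Y n).card : ℂ))⁻¹ * (Φ (i : Plane) * σ (i : Plane)) := by
      rw [← Finset.sum_coe_sort (Y n) (fun y => Φ y * σ y), Finset.mul_sum]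
    have hdiffeq : (∑ y : ↥(Y n), Φ (y : Plane) * q y)
        - (((Y n).card : ℂ))⁻¹ * ∑ y ∈ Y n, Φ y * σ y
        = ∑ i : ↥(Y n), (((Y n).card : ℂ))⁻¹ *
            (Φ (i : Plane) * (((Y n).card : ℂ) * q i - σ (i : Plane))) := by
      rw [hArw, ← Finset.sum_sub_distrib]
      refine Finset.sum_congr rfl fun i _ => ?_
      field_simp
    rw [hdiffeq]
    have hterm : ∀ i : ↥(Y n), ‖(((Y n).card : ℂ))⁻¹ *
        (Φ (i : Plane) * (((Y n).card : ℂ) * q i - σ (i : Plane)))‖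
        ≤ (((Y n).card : ℝ))⁻¹ * (CΦ * Bn) := by
      intro i
      rw [norm_mul, norm_mul, norm_inv, Complex.norm_natCast]
      refine mul_le_mul_of_nonneg_left ?_ (by positivity)
      exact mul_le_mul (hCΦ _ (hYΓ n i.2)) (hw i) (norm_nonneg _)
        (le_trans (norm_nonneg _) (hCΦ _ (hYΓ n i.2)))
    calc ‖∑ i : ↥(Y n), (((Y n).card : ℂ))⁻¹ *
            (Φ (i : Plane) * (((Y n).card : ℂ) * q i - σ (i : Plane)))‖
        ≤ ∑ i : ↥(Y n), ‖(((Y n).card : ℂ))⁻¹ *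
            (Φ (i : Plane) * (((Y n).card : ℂ) * q i - σ (i : Plane)))‖ :=
          norm_sum_le _ _
      _ ≤ ∑ _i : ↥(Y n), (((Y n).card : ℝ))⁻¹ * (CΦ * Bn) :=
          Finset.sum_le_sum fun i _ => hterm i
      _ = ((Y n).card : ℝ) * ((((Y n).card : ℝ))⁻¹ * (CΦ * Bn)) := by
          rw [Finset.sum_const, Finset.card_univ, Fintype.card_coe, nsmul_eq_mul]
      _ = CΦ * Bn := by
          rw [← mul_assoc, mul_inv_cancel₀ hNneR, one_mul]
  have hzero : Tendsto (fun n => (∑ y : ↥(Y n), Φ y * ((Matrix.of (fun y y' : ↥(Y n) =>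
      if y = y' then (((Y n).card : ℂ) * α - ξ y) else -G y y'))⁻¹).mulVec
        (fun y' : ↥(Y n) => F y') y)
      - (((Y n).card : ℂ))⁻¹ * ∑ y ∈ Y n, Φ y * σ y) atTop (nhds 0) := by
    rw [tendsto_zero_iff_norm_tendsto_zero]
    exact squeeze_zero' (Eventually.of_forall fun n => norm_nonneg _) hdiff hB
  have hfin := hA.add hzero
  rw [add_zero] at hfin
  exact hfin.congr fun n => by ring
end
end

section
/- Let R > 0 and let m be the arc-length measure of the circle of radius R centred at the origin in ℝ², i.e. the pushforward under θ ↦ (R cos θ, R sin θ) of R times Lebesgue measure on [0, 2π). Then m belongs to the generalized Kato class: lim_{ε→0⁺} sup_{x∈ℝ²} ∫_{B(x,ε)} |ln|x−y|| m(dy) = 0. -/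
/-!
The circle measure `m` is upper `1`-regular, `m (closedBall y r) ≤ 2π r`: it is the image of
(`R` times) Haar measure on `ℝ / 2πℤ` under `θ ↦ R e^{iθ}`, which is antilipschitz because a
chord is at least `2 / π` times the arc it subtends (Jordan's inequality). For any upper
`1`-regular measure, `ε ≤ 1` and `t > 0`, the level set `{y ∈ B(x, ε) : |log |x - y|| > t}` lies
in a ball of radius `min (e^{-t}) ε ≤ √ε e^{-t/2}`, so the layer-cake formula bounds
`∫_{B(x,ε)} |log |x - y|| dm(y)` by `2 C √ε`, uniformly in `x`.
-/

open MeasureTheory Filter Set Real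

noncomputable section

/-- A positive Borel measure `m` on `ℝ²` belongs to the generalized Kato class if
`lim_{ε→0⁺} sup_{x∈ℝ²} ∫_{B(x,ε)} |ln|x−y|| m(dy) = 0`. -/
def GenKatoClass (m : Measure Plane) : Prop :=
  Tendsto (fun ε : ℝ => ⨆ x : Plane,
      ∫⁻ y in Metric.ball x ε, ENNReal.ofReal |Real.log (dist x y)| ∂m)
    (nhdsWithin 0 (Set.Ioi 0)) (nhds 0)

open scoped ENNReal NNReal Topology

lemma lintegral_Ioi_ofReal_exp_neg_half :
    ∫⁻ t in Ioi (0 : ℝ), ENNReal.ofReal (exp (-t / 2)) = 2 := by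
  have hexp (t : ℝ) : exp (-t / 2) = exp (-1 / 2 * t) := by ring_nf
  simp_rw [hexp]
  rw [← ofReal_integral_eq_lintegral_ofReal (integrableOn_exp_mul_Ioi (by norm_num) 0)
    (ae_of_all _ fun t => (exp_pos _).le), integral_exp_mul_Ioi (by norm_num)]
  norm_num

lemma min_exp_neg_le_sqrt_mul_exp {ε : ℝ} (hε : 0 ≤ ε) (t : ℝ) :
    min (exp (-t)) ε ≤ √ε * exp (-t / 2) := by
  have hexp : exp (-t) = exp (-t / 2) ^ 2 := by rw [← exp_nat_mul]; ring_nf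
  rw [hexp, ← sq_sqrt hε, sqrt_sq (sqrt_nonneg ε)]
  rcases le_total (exp (-t / 2)) √ε with h | h
  · exact (min_le_left _ _).trans (by nlinarith [exp_pos (-t / 2)])
  · exact (min_le_right _ _).trans (by nlinarith [sqrt_nonneg ε])

section LogKernel

variable {X : Type*} [PseudoMetricSpace X]

lemma abs_log_dist_gt_inter_ball_subset {x : X} {ε t : ℝ} (hε : ε ≤ 1) :
    {y | t < |log (dist x y)|} ∩ Metric.ball x ε ⊆ Metric.ball x (min (exp (-t)) ε) := by
  rintro y ⟨hy, hyε⟩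
  rw [Metric.mem_ball, dist_comm] at hyε ⊢
  refine lt_min ?_ hyε
  rcases (dist_nonneg : 0 ≤ dist x y).eq_or_lt with h0 | hpos
  · rw [← h0]; exact exp_pos _
  · rw [mem_ofPred_eq, abs_of_neg (log_neg hpos (hyε.trans_le hε))] at hy
    rw [← log_lt_iff_lt_exp hpos]; linarith

variable [MeasurableSpace X] [OpensMeasurableSpace X]

theorem lintegral_ball_abs_log_dist_le (μ : Measure X) {C : ℝ≥0∞}
    (hμ : ∀ x r, μ (Metric.closedBall x r) ≤ C * ENNReal.ofReal r) (x : X) {ε : ℝ}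
    (hε₀ : 0 ≤ ε) (hε₁ : ε ≤ 1) :
    ∫⁻ y in Metric.ball x ε, ENNReal.ofReal |log (dist x y)| ∂μ ≤ 2 * C * ENNReal.ofReal √ε := by
  have hlevel (t : ℝ) : (μ.restrict (Metric.ball x ε)) {y | t < |log (dist x y)|}
      ≤ C * ENNReal.ofReal √ε * ENNReal.ofReal (exp (-t / 2)) := by
    rw [Measure.restrict_apply' measurableSet_ball, mul_assoc,
      ← ENNReal.ofReal_mul (sqrt_nonneg ε)]
    calc _ ≤ μ (Metric.closedBall x (min (exp (-t)) ε)) := measure_mono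
          ((abs_log_dist_gt_inter_ball_subset hε₁).trans Metric.ball_subset_closedBall)
      _ ≤ _ := by grw [hμ, min_exp_neg_le_sqrt_mul_exp hε₀ t]
  have hmeas : Measurable fun y => |log (dist x y)| :=
    (measurable_log.comp (continuous_const.dist continuous_id).measurable).abs
  calc ∫⁻ y in Metric.ball x ε, ENNReal.ofReal |log (dist x y)| ∂μ
      = ∫⁻ t in Ioi 0, (μ.restrict (Metric.ball x ε)) {y | t < |log (dist x y)|} :=
        lintegral_eq_lintegral_meas_lt _ (ae_of_all _ fun _ => abs_nonneg _) hmeas.aemeasurable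
    _ ≤ ∫⁻ t in Ioi 0, C * ENNReal.ofReal √ε * ENNReal.ofReal (exp (-t / 2)) :=
        lintegral_mono hlevel
    _ = 2 * C * ENNReal.ofReal √ε := by
        rw [lintegral_const_mul _ (by fun_prop), lintegral_Ioi_ofReal_exp_neg_half]
        ring

end LogKernel

theorem genKatoClass_of_measure_closedBall_le (m : Measure Plane) {C : ℝ≥0∞} (hC : C ≠ ∞)
    (hm : ∀ x r, m (Metric.closedBall x r) ≤ C * ENNReal.ofReal r) : GenKatoClass m := by
  have hbound : Tendsto (fun ε : ℝ => 2 * C * ENNReal.ofReal √ε) (𝓝[>] 0) (𝓝 0) := by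
    have hsqrt : Tendsto (fun ε : ℝ => ENNReal.ofReal √ε) (𝓝 0) (𝓝 0) := by
      simpa using ENNReal.tendsto_ofReal (continuous_sqrt.tendsto 0)
    simpa using (ENNReal.Tendsto.const_mul hsqrt (Or.inr (by finiteness))).mono_left
      nhdsWithin_le_nhds
  refine tendsto_of_tendsto_of_tendsto_of_le_of_le' tendsto_const_nhds hbound
    (Eventually.of_forall fun _ => zero_le) ?_
  filter_upwards [Ioc_mem_nhdsGT zero_lt_one] with ε hε
  exact iSup_le fun x => lintegral_ball_abs_log_dist_le m hm x hε.1.le hε.2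

namespace AddCircle

variable {T : ℝ}

theorem norm_le_mul_norm_toCircle_sub_one (hT : 0 < T) (x : AddCircle T) :
    ‖x‖ ≤ T / 4 * ‖(toCircle x : ℂ) - 1‖ := by
  induction x using QuotientAddGroup.induction_on with | H u => ?_
  have hhalf := norm_le_half_period T (x := (u : AddCircle T)) hT.ne'
  rw [norm_eq, abs_of_pos hT] at hhalf
  rw [norm_eq]
  set k := round (T⁻¹ * u)
  set y := u - k * T
  have hsin : |sin (2 * π / T * u / 2)| = |sin (π / T * y)| := by
    rw [show 2 * π / T * u / 2 = π / T * y + k * π by simp only [y]; field_simp; ring,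
      sin_add_int_mul_pi, abs_mul, abs_zpow, abs_neg, abs_one, one_zpow, one_mul]
  have hjordan := mul_abs_le_abs_sin (x := π / T * y) (by
    rw [abs_mul, abs_of_pos (by positivity)]
    calc π / T * |y| ≤ π / T * (T / 2) := by gcongr
      _ = π / 2 := by field_simp)
  rw [toCircle_apply_mk, Circle.coe_exp, mul_comm _ Complex.I,
    Complex.norm_exp_I_mul_ofReal_sub_one, norm_mul, Real.norm_two, Real.norm_eq_abs, hsin]
  rw [abs_mul, abs_of_pos (by positivity)] at hjordan
  calc |y| = T / 4 * (2 * (2 / π * (π / T * |y|))) := by field_simp; ring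
    _ ≤ T / 4 * (2 * |sin (π / T * y)|) := by gcongr

theorem dist_le_mul_dist_toCircle (hT : 0 < T) (x y : AddCircle T) :
    dist x y ≤ T / 4 * dist (toCircle x : ℂ) (toCircle y) := by
  have hsplit : (toCircle x : ℂ) - toCircle y = (toCircle (x - y) - 1) * toCircle y := by
    rw [sub_mul, one_mul, ← Circle.coe_mul, ← toCircle_add, sub_add_cancel]
  rw [dist_eq_norm, dist_eq_norm, hsplit, norm_mul, Circle.norm_coe, mul_one]
  exact norm_le_mul_norm_toCircle_sub_one hT _

theorem volume_closedBall_le [Fact (0 < T)] (x : AddCircle T) (r : ℝ) :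
    volume (Metric.closedBall x r) ≤ 2 * ENNReal.ofReal r := by
  rw [volume_closedBall, ← ENNReal.ofReal_ofNat 2, ← ENNReal.ofReal_mul zero_le_two]
  exact ENNReal.ofReal_le_ofReal (min_le_right _ _)

end AddCircle

theorem measure_preimage_closedBall_le_of_antilipschitzWith {X Y : Type*}
    [PseudoMetricSpace X] [MeasurableSpace X] [PseudoMetricSpace Y] (μ : Measure X)
    {C : ℝ≥0∞} (hμ : ∀ x r, μ (Metric.closedBall x r) ≤ C * ENNReal.ofReal r) {K : ℝ≥0}
    {g : X → Y} (hg : AntilipschitzWith K g) (y : Y) (r : ℝ) :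
    μ (g ⁻¹' Metric.closedBall y r) ≤ C * ENNReal.ofReal (2 * K * r) := by
  rcases (g ⁻¹' Metric.closedBall y r).eq_empty_or_nonempty with hempty | ⟨x₀, hx₀⟩
  · simp [hempty]
  refine (measure_mono fun x hx => ?_).trans (hμ x₀ _)
  rw [Metric.mem_closedBall]
  calc dist x x₀ ≤ K * dist (g x) (g x₀) := hg.le_mul_dist x x₀
    _ ≤ K * (r + r) := by gcongr; exact (dist_triangle_right _ _ y).trans (add_le_add hx hx₀)
    _ = 2 * K * r := by ring

instance fact_two_pi_pos : Fact (0 < 2 * π) := ⟨two_pi_pos⟩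

/-- Parametrizing by `ℝ / 2πℤ` rather than by `[0, 2π)` makes the parametrization
antilipschitz. -/
def circleParam (R : ℝ) (θ : AddCircle (2 * π)) : Plane :=
  Complex.orthonormalBasisOneI.repr (R * (AddCircle.toCircle θ : ℂ))

lemma circleParam_coe (R θ : ℝ) :
    circleParam R θ = (EuclideanSpace.equiv (Fin 2) ℝ).symm ![R * cos θ, R * sin θ] := by
  rw [circleParam, AddCircle.toCircle_apply_mk, Circle.coe_exp]
  ext i
  fin_cases i <;> simp [Complex.exp_ofReal_mul_I_re, Complex.exp_ofReal_mul_I_im]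

lemma measurable_circleParam (R : ℝ) : Measurable (circleParam R) := by
  unfold circleParam; fun_prop

lemma antilipschitzWith_circleParam {R : ℝ} (hR : 0 < R) :
    AntilipschitzWith (π / (2 * R)).toNNReal (circleParam R) := by
  have hscale (z w : ℂ) : dist (R * z) (R * w) = R * dist z w := by
    rw [dist_eq_norm, dist_eq_norm, ← mul_sub, norm_mul, Complex.norm_real,
      Real.norm_of_nonneg hR.le]
  refine AntilipschitzWith.of_le_mul_dist fun a b => ?_
  rw [Real.coe_toNNReal _ (by positivity), circleParam, circleParam,
    LinearIsometryEquiv.dist_map, hscale]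
  calc dist a b ≤ 2 * π / 4 * dist (AddCircle.toCircle a : ℂ) (AddCircle.toCircle b) :=
        AddCircle.dist_le_mul_dist_toCircle two_pi_pos a b
    _ = π / (2 * R) * (R * dist (AddCircle.toCircle a : ℂ) (AddCircle.toCircle b)) := by
        field_simp; ring

lemma map_circleParam_closedBall_le {R : ℝ} (hR : 0 < R) (y : Plane) (r : ℝ) :
    Measure.map (circleParam R) (ENNReal.ofReal R • volume) (Metric.closedBall y r)
      ≤ ENNReal.ofReal (2 * π) * ENNReal.ofReal r := by
  rw [Measure.map_apply (measurable_circleParam R) Metric.isClosed_closedBall.measurableSet,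
    Measure.smul_apply, smul_eq_mul]
  calc _ ≤ ENNReal.ofReal R * (2 * ENNReal.ofReal (2 * (π / (2 * R)).toNNReal * r)) := by
        gcongr
        exact measure_preimage_closedBall_le_of_antilipschitzWith _
          AddCircle.volume_closedBall_le (antilipschitzWith_circleParam hR) y r
    _ = ENNReal.ofReal (2 * π) * ENNReal.ofReal r := by
        rw [Real.coe_toNNReal _ (by positivity), show 2 * (π / (2 * R)) * r = π / R * r by
          field_simp, ENNReal.ofReal_mul (by positivity), ← mul_assoc, ← mul_assoc,
          ← ENNReal.ofReal_ofNat 2, ← ENNReal.ofReal_mul hR.le,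
          ← ENNReal.ofReal_mul (by positivity)]
        congr 2
        field_simp

lemma map_circle_eq_map_circleParam (R : ℝ) :
    Measure.map (fun θ : ℝ => (EuclideanSpace.equiv (Fin 2) ℝ).symm ![R * cos θ, R * sin θ])
        (ENNReal.ofReal R • (volume : Measure ℝ).restrict (Ico 0 (2 * π)))
      = Measure.map (circleParam R) (ENNReal.ofReal R • volume) := by
  have hcomp : (fun θ : ℝ => (EuclideanSpace.equiv (Fin 2) ℝ).symm ![R * cos θ, R * sin θ])
      = circleParam R ∘ ((↑) : ℝ → AddCircle (2 * π)) :=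
    funext fun θ => (circleParam_coe R θ).symm
  have hmk := AddCircle.measurePreserving_mk (2 * π) 0
  rw [zero_add] at hmk
  rw [hcomp, Measure.restrict_congr_set Ico_ae_eq_Ioc,
    ← Measure.map_map (measurable_circleParam R) hmk.measurable, Measure.map_smul, hmk.map_eq]

/-- the arc-length measure of the circle of radius `R` centred at the
origin — the pushforward under `θ ↦ (R cos θ, R sin θ)` of `R` times Lebesgue
measure on `[0, 2π)` — belongs to the generalized Kato class. -/
theorem circle_measure_genKato (R : ℝ) (hR : 0 < R) :
    GenKatoClass
      (Measure.map
        (fun θ : ℝ => (EuclideanSpace.equiv (Fin 2) ℝ).symm ![R * Real.cos θ, R * Real.sin θ])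
        ((ENNReal.ofReal R) • ((volume : Measure ℝ).restrict (Set.Ico 0 (2 * Real.pi))))) := by
  rw [map_circle_eq_map_circleParam]
  exact genKatoClass_of_measure_closedBall_le _ ENNReal.ofReal_ne_top
    (map_circleParam_closedBall_le hR)
end
end

section
/- Let L > 0 and let γ : [0, L] → ℝ² satisfy |γ(s) − γ(t)| ≤ C₂ |s − t| and |γ(s) − γ(t)| ≥ c |s − t| for all s, t ∈ [0, L], for some constants 0 < c ≤ C₂ (a bi-Lipschitz curve). Then the pushforward m under γ of Lebesgue measure on [0, L] belongs to the generalized Kato class: lim_{ε→0⁺} sup_{x∈ℝ²} ∫_{B(x,ε)} |ln|x−y|| m(dy) = 0. -/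
open MeasureTheory Filter Set

noncomputable section

/-!
Fix `x` and let `t₀` minimise `t ↦ dist x (γ t)` on `[0, L]`. The lower Lipschitz bound and the
triangle inequality through `x` give `c |t - t₀| ≤ 2 dist x (γ t)`, so the parameters of the points
of the curve in `B(x, ε)` lie within `2ε/c` of `t₀`, and there
`|log dist x (γ t)| ≤ |log (c/2 · |t - t₀|)| ≲ |t - t₀|^(-1/2)`. Integrating this in `t` gives a
bound `16 √ε / c`, uniform in `x`.
-/

open Metric

lemma lintegral_Ioc_rpow_neg {p : ℝ} (hp : p < 1) {r : ℝ} (hr : 0 ≤ r) :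
    ∫⁻ v in Ioc 0 r, ENNReal.ofReal (v ^ (-p)) = ENNReal.ofReal (r ^ (1 - p) / (1 - p)) := by
  have hint : IntervalIntegrable (fun v : ℝ => v ^ (-p)) volume 0 r :=
    intervalIntegral.intervalIntegrable_rpow' (by linarith)
  rw [← ofReal_integral_eq_lintegral_ofReal (hint.1)
      ((ae_restrict_iff' measurableSet_Ioc).2 (ae_of_all _ fun v hv => Real.rpow_nonneg hv.1.le _)),
    ← intervalIntegral.integral_of_le hr, integral_rpow (Or.inl (by linarith)),
    Real.zero_rpow (by linarith), sub_zero, neg_add_eq_sub]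

lemma lintegral_Ioo_abs_sub_rpow_neg_le {p : ℝ} (hp : p < 1) (a : ℝ) {r : ℝ} (hr : 0 ≤ r) :
    ∫⁻ u in Ioo (a - r) (a + r), ENNReal.ofReal (|u - a| ^ (-p)) ≤
      2 * ENNReal.ofReal (r ^ (1 - p) / (1 - p)) := by
  set f : ℝ → ENNReal := fun v => ENNReal.ofReal (|v| ^ (-p))
  have hright : ∫⁻ u in Ico a (a + r), f (u - a) = ∫⁻ v in Ico 0 r, f v := by
    have h := (measurePreserving_sub_right volume a).setLIntegral_comp_preimage_emb
      (measurableEmbedding_subRight a) f (Ico 0 r)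
    rwa [preimage_sub_const_Ico, zero_add, add_comm] at h
  have hleft : ∫⁻ u in Ioc (a - r) a, f (u - a) = ∫⁻ v in Ico 0 r, f v := by
    have h := (Measure.measurePreserving_sub_left volume a).setLIntegral_comp_preimage_emb
      (measurableEmbedding_subLeft a) f (Ico 0 r)
    rw [preimage_const_sub_Ico, sub_zero] at h
    simpa only [f, abs_sub_comm a] using h
  have hpos : ∫⁻ v in Ico 0 r, f v = ENNReal.ofReal (r ^ (1 - p) / (1 - p)) := by
    rw [setLIntegral_congr Ico_ae_eq_Ioc, ← lintegral_Ioc_rpow_neg hp hr]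
    exact setLIntegral_congr_fun measurableSet_Ioc fun v hv => by simp [f, abs_of_pos hv.1]
  calc ∫⁻ u in Ioo (a - r) (a + r), f (u - a)
      ≤ ∫⁻ u in Ioc (a - r) a ∪ Ico a (a + r), f (u - a) :=
        lintegral_mono_set fun u hu => (le_or_gt u a).elim
          (fun h => Or.inl ⟨hu.1, h⟩) fun h => Or.inr ⟨h.le, hu.2⟩
    _ ≤ _ := lintegral_union_le _ _ _
    _ = 2 * ENNReal.ofReal (r ^ (1 - p) / (1 - p)) := by rw [hleft, hright, hpos, two_mul]

lemma abs_log_le_rpow_neg_div {z p : ℝ} (hz : 0 < z) (hz1 : z ≤ 1) (hp : 0 < p) :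
    |Real.log z| ≤ z ^ (-p) / p := by
  have h := Real.abs_log_mul_self_rpow_lt z p hz hz1 hp
  rw [abs_mul, abs_of_pos (Real.rpow_pos_of_pos hz p), ← lt_div_iff₀ (Real.rpow_pos_of_pos hz p),
    div_div, mul_comm, ← div_div] at h
  rw [Real.rpow_neg hz.le, inv_eq_one_div]
  exact h.le

lemma mul_abs_sub_le_two_mul_dist_of_isMinOn {E : Type*} [PseudoMetricSpace E] {γ : ℝ → E}
    {S : Set ℝ} {c : ℝ} {x : E} {t₀ t : ℝ}
    (hlow : ∀ s ∈ S, ∀ t ∈ S, c * |s - t| ≤ dist (γ s) (γ t))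
    (ht₀ : t₀ ∈ S) (hmin : IsMinOn (fun t => dist x (γ t)) S t₀) (ht : t ∈ S) :
    c * |t - t₀| ≤ 2 * dist x (γ t) :=
  calc c * |t - t₀| ≤ dist (γ t) (γ t₀) := hlow t ht t₀ ht₀
    _ ≤ dist x (γ t) + dist x (γ t₀) := dist_triangle_left _ _ _
    _ ≤ 2 * dist x (γ t) := by linarith [isMinOn_iff.1 hmin t ht]

lemma indicator_ball_abs_log_dist_le {E : Type*} [PseudoMetricSpace E] {γ : ℝ → E}
    {S : Set ℝ} {c ε : ℝ} {x : E} {t₀ t : ℝ} (hc : 0 < c) (hε : ε ≤ 1)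
    (hlow : ∀ s ∈ S, ∀ t ∈ S, c * |s - t| ≤ dist (γ s) (γ t))
    (ht₀ : t₀ ∈ S) (hmin : IsMinOn (fun t => dist x (γ t)) S t₀) (ht : t ∈ S) (hne : t ≠ t₀) :
    (ball x ε).indicator (fun y => ENNReal.ofReal |Real.log (dist x y)|) (γ t) ≤
      (Ioo (t₀ - 2 * ε / c) (t₀ + 2 * ε / c)).indicator
        (fun u => ENNReal.ofReal (((c / 2) * |u - t₀|) ^ (-(1 / 2 : ℝ)) / (1 / 2))) t := by
  by_cases hball : γ t ∈ ball x ε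
  swap
  · simp [indicator_of_notMem hball]
  have hdist : dist x (γ t) < ε := by rwa [mem_ball, dist_comm] at hball
  have hclose := mul_abs_sub_le_two_mul_dist_of_isMinOn hlow ht₀ hmin ht
  have hpos : 0 < (c / 2) * |t - t₀| := by
    have := abs_pos.2 (sub_ne_zero.2 hne)
    positivity
  have hle : (c / 2) * |t - t₀| ≤ dist x (γ t) := by linarith
  have hmem : t ∈ Ioo (t₀ - 2 * ε / c) (t₀ + 2 * ε / c) := by
    have : |t - t₀| < 2 * ε / c := by rw [lt_div_iff₀ hc]; linarith
    rw [abs_sub_lt_iff] at this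
    constructor <;> linarith
  rw [indicator_of_mem hball, indicator_of_mem hmem]
  refine ENNReal.ofReal_le_ofReal ?_
  calc |Real.log (dist x (γ t))| ≤ |Real.log ((c / 2) * |t - t₀|)| := by
        rw [abs_of_nonpos (Real.log_nonpos dist_nonneg (by linarith)),
          abs_of_nonpos (Real.log_nonpos hpos.le (by linarith))]
        exact neg_le_neg (Real.log_le_log hpos hle)
    _ ≤ _ := abs_log_le_rpow_neg_div hpos (by linarith) one_half_pos

theorem lintegral_ball_abs_log_dist_map_le {E : Type*} [PseudoMetricSpace E] [MeasurableSpace E]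
    [OpensMeasurableSpace E] {γ : ℝ → E} {S : Set ℝ} {c ε : ℝ} (hS : IsCompact S)
    (hSne : S.Nonempty) (hγ : ContinuousOn γ S) (hc : 0 < c)
    (hlow : ∀ s ∈ S, ∀ t ∈ S, c * |s - t| ≤ dist (γ s) (γ t)) (hε₀ : 0 ≤ ε) (hε₁ : ε ≤ 1)
    (x : E) :
    ∫⁻ y in ball x ε, ENNReal.ofReal |Real.log (dist x y)| ∂(Measure.map γ (volume.restrict S)) ≤
      ENNReal.ofReal (16 / c * √ε) := by
  obtain ⟨t₀, ht₀, hmin⟩ :=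
    hS.exists_isMinOn hSne ((continuous_const.dist continuous_id).comp_continuousOn hγ)
  set r := 2 * ε / c
  set K := (c / 2) ^ (-(1 / 2 : ℝ)) / (1 / 2)
  have hsplit : ∀ u, ENNReal.ofReal (((c / 2) * |u - t₀|) ^ (-(1 / 2 : ℝ)) / (1 / 2)) =
      ENNReal.ofReal K * ENNReal.ofReal (|u - t₀| ^ (-(1 / 2 : ℝ))) := fun u => by
    rw [← ENNReal.ofReal_mul (by positivity), Real.mul_rpow (by positivity) (abs_nonneg _),
      mul_div_right_comm]
  calc ∫⁻ y in ball x ε, ENNReal.ofReal |Real.log (dist x y)| ∂(Measure.map γ (volume.restrict S))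
      = ∫⁻ y, (ball x ε).indicator (fun y => ENNReal.ofReal |Real.log (dist x y)|) y
          ∂(Measure.map γ (volume.restrict S)) := (lintegral_indicator measurableSet_ball _).symm
    _ ≤ ∫⁻ t in S, (ball x ε).indicator (fun y => ENNReal.ofReal |Real.log (dist x y)|) (γ t) :=
        lintegral_map_le _ _
    _ ≤ ∫⁻ t in S, (Ioo (t₀ - r) (t₀ + r)).indicator
          (fun u => ENNReal.ofReal (((c / 2) * |u - t₀|) ^ (-(1 / 2 : ℝ)) / (1 / 2))) t := by
        -- `t = t₀` is excluded since there the right side is the junk value `0 ^ (-1/2) = 0`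
        refine lintegral_mono_ae ?_
        filter_upwards [ae_restrict_mem hS.measurableSet, (volume.restrict S).ae_ne t₀]
          with t ht hne
        exact indicator_ball_abs_log_dist_le hc hε₁ hlow ht₀ hmin ht hne
    _ ≤ ∫⁻ u in Ioo (t₀ - r) (t₀ + r),
          ENNReal.ofReal (((c / 2) * |u - t₀|) ^ (-(1 / 2 : ℝ)) / (1 / 2)) := by
        rw [← lintegral_indicator measurableSet_Ioo]
        exact setLIntegral_le_lintegral _ _
    _ = ENNReal.ofReal K *
          ∫⁻ u in Ioo (t₀ - r) (t₀ + r), ENNReal.ofReal (|u - t₀| ^ (-(1 / 2 : ℝ))) := by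
        simp_rw [hsplit]
        exact lintegral_const_mul' _ _ ENNReal.ofReal_ne_top
    _ ≤ ENNReal.ofReal K * (2 * ENNReal.ofReal (r ^ (1 - 1 / 2 : ℝ) / (1 - 1 / 2))) := by
        gcongr
        exact lintegral_Ioo_abs_sub_rpow_neg_le (by norm_num) t₀ (by positivity)
    _ = ENNReal.ofReal (16 / c * √ε) := by
        rw [← ENNReal.ofReal_ofNat 2, ← ENNReal.ofReal_mul (by norm_num),
          ← ENNReal.ofReal_mul (by positivity)]
        congr 1
        simp only [K, r]
        rw [Real.rpow_neg (by positivity), ← Real.sqrt_eq_rpow,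
          show (1 - 1 / 2 : ℝ) = 1 / 2 by norm_num, ← Real.sqrt_eq_rpow, Real.sqrt_div' _ hc.le, Real.sqrt_div' _ zero_le_two,
          Real.sqrt_mul zero_le_two]
        have h2 : √(2 : ℝ) ^ 2 = 2 := Real.sq_sqrt zero_le_two
        have hc2 : √c ^ 2 = c := Real.sq_sqrt hc.le
        have : 0 < √c := Real.sqrt_pos.2 hc
        field_simp
        rw [hc2]; ring_nf; rw [h2]; ring

theorem biLipschitz_curve_genKato_general (L : ℝ) (hL : 0 < L)
    (γ : ℝ → Plane) (c C₂ : ℝ) (hc : 0 < c)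
    (hlip : ∀ s ∈ Set.Icc (0 : ℝ) L, ∀ t ∈ Set.Icc (0 : ℝ) L,
      dist (γ s) (γ t) ≤ C₂ * |s - t|)
    (hlow : ∀ s ∈ Set.Icc (0 : ℝ) L, ∀ t ∈ Set.Icc (0 : ℝ) L,
      c * |s - t| ≤ dist (γ s) (γ t)) :
    GenKatoClass (Measure.map γ ((volume : Measure ℝ).restrict (Set.Icc 0 L))) := by
  have hγ : ContinuousOn γ (Icc 0 L) :=
    (LipschitzOnWith.of_dist_le_mul (K := C₂.toNNReal) fun s hs t ht => by
      rw [Real.dist_eq]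
      exact (hlip s hs t ht).trans (by gcongr; exact Real.le_coe_toNNReal C₂)).continuousOn
  have hbound : ∀ ε ∈ Ioo (0 : ℝ) 1, ⨆ x : Plane, ∫⁻ y in ball x ε,
      ENNReal.ofReal |Real.log (dist x y)| ∂(Measure.map γ (volume.restrict (Icc 0 L))) ≤
        ENNReal.ofReal (16 / c * √ε) := fun ε hε =>
    iSup_le (lintegral_ball_abs_log_dist_map_le isCompact_Icc (nonempty_Icc.2 hL.le) hγ hc hlow
      hε.1.le hε.2.le)
  have hlim :
      Tendsto (fun ε : ℝ => ENNReal.ofReal (16 / c * √ε)) (nhdsWithin 0 (Ioi 0)) (nhds 0) := by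
    have h : Tendsto (fun ε : ℝ => 16 / c * √ε) (nhds 0) (nhds 0) :=
      (continuous_const.mul Real.continuous_sqrt).tendsto' 0 0 (by simp)
    simpa using (ENNReal.tendsto_ofReal h).mono_left nhdsWithin_le_nhds
  exact tendsto_of_tendsto_of_tendsto_of_le_of_le' tendsto_const_nhds hlim
    (Eventually.of_forall fun _ => zero_le) (eventually_of_mem (Ioo_mem_nhdsGT one_pos) hbound)

/-- the arc-length (Dirac) measure of a bi-Lipschitz curve
`γ : [0,L] → ℝ²`, i.e. the pushforward under `γ` of Lebesgue measure on `[0,L]`,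
belongs to the generalized Kato class. -/
theorem biLipschitz_curve_genKato (L : ℝ) (hL : 0 < L)
    (γ : ℝ → Plane) (c C₂ : ℝ) (hc : 0 < c) (hcC : c ≤ C₂)
    (hlip : ∀ s ∈ Set.Icc (0 : ℝ) L, ∀ t ∈ Set.Icc (0 : ℝ) L,
      dist (γ s) (γ t) ≤ C₂ * |s - t|)
    (hlow : ∀ s ∈ Set.Icc (0 : ℝ) L, ∀ t ∈ Set.Icc (0 : ℝ) L,
      c * |s - t| ≤ dist (γ s) (γ t)) :
    GenKatoClass (Measure.map γ ((volume : Measure ℝ).restrict (Set.Icc 0 L))) :=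
  biLipschitz_curve_genKato_general L hL γ c C₂ hc hlip hlow
end
end
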